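/- arXiv:2312.00509 — 3 statements merged into one kernel-verified Lean document; each statement's English description precedes it below -/
import Mathlib

section
/- Let D be a DAG and let u → v be a covered edge of D. Then the graph D' obtained from D by reversing the edge u → v is a DAG. -/
def Acyclic {V : Type*} (E : V → V → Prop) : Prop :=
  ∀ v, ¬ Relation.TransGen E v v

/-- Parents of `j` in the graph `E`. -/
def pa {V : Type*} (E : V → V → Prop) (j : V) : Set V := {i | E i j}

/-- The edge `u → v` is covered in `E`: it is an edge and `{u} ∪ pa(u) = pa(v)`. -/
def CoveredEdge {V : Type*} (E : V → V → Prop) (u v : V) : Prop :=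
  E u v ∧ insert u (pa E u) = pa E v

def reverseEdge {V : Type*} (E : V → V → Prop) (u v : V) : V → V → Prop :=
  fun a b => (E a b ∧ ¬ (a = u ∧ b = v)) ∨ (a = v ∧ b = u)

/-! A cycle after the reversal either avoids the new edge `v → u`, and is then a cycle of `E`, or
passes through it, and then `E` minus `u → v` has a path from `u` to `v`. The last edge `w → v`
of that path has `w ≠ u`, so coverage makes `w` a parent of `u`, which closes a cycle in `E`. -/

open Relation

section

variable {V : Type*}

def deleteEdge (E : V → V → Prop) (u v : V) : V → V → Prop :=
  fun a b => E a b ∧ ¬ (a = u ∧ b = v)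

lemma deleteEdge_le (E : V → V → Prop) (u v : V) : deleteEdge E u v ≤ E :=
  fun _ _ h => h.1

lemma transGen_addEdge_cases {F : V → V → Prop} {u v x y : V}
    (h : TransGen (fun a b => F a b ∨ (a = v ∧ b = u)) x y) :
    TransGen F x y ∨ (ReflTransGen F x v ∧ ReflTransGen F u y) := by
  induction h with
  | single hxy =>
    rcases hxy with hxy | ⟨rfl, rfl⟩
    · exact .inl (.single hxy)
    · exact .inr ⟨.refl, .refl⟩
  | tail _ hyz ih =>
    rcases hyz with hyz | ⟨rfl, rfl⟩
    · rcases ih with hxy | ⟨hxv, huy⟩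
      · exact .inl (hxy.tail hyz)
      · exact .inr ⟨hxv, huy.tail hyz⟩
    · rcases ih with hxy | ⟨hxv, _⟩
      · exact .inr ⟨hxy.to_reflTransGen, .refl⟩
      · exact .inr ⟨hxv, .refl⟩

lemma CoveredEdge.rel_of_deleteEdge {E : V → V → Prop} {u v w : V} (hcov : CoveredEdge E u v)
    (hwv : deleteEdge E u v w v) : E w u := by
  have hw : w ∈ insert u (pa E u) := hcov.2 ▸ hwv.1
  rcases hw with rfl | hwu
  · exact absurd ⟨rfl, rfl⟩ hwv.2
  · exact hwu

lemma Acyclic.not_reflTransGen_deleteEdge_of_coveredEdge {E : V → V → Prop} (hE : Acyclic E)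
    {u v : V} (hcov : CoveredEdge E u v) : ¬ ReflTransGen (deleteEdge E u v) u v := by
  intro huv
  rcases huv.cases_tail with hvu | ⟨w, huw, hwv⟩
  · exact hE u (.single (hvu ▸ hcov.1))
  · exact hE u (.tail' (ReflTransGen.mono (deleteEdge_le E u v) _ _ huw)
      (hcov.rel_of_deleteEdge hwv))

end

/-- Reversing a covered edge of a DAG yields a DAG. -/
theorem reverse_covered_edge_acyclic {V : Type*} (E : V → V → Prop)
    (hE : Acyclic E) (u v : V) (hcov : CoveredEdge E u v) :
    Acyclic (reverseEdge E u v) := by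
  intro w hw
  rcases transGen_addEdge_cases (F := deleteEdge E u v) hw with hww | ⟨hwv, huw⟩
  · exact hE w (TransGen.mono (deleteEdge_le E u v) _ _ hww)
  · exact hE.not_reflTransGen_deleteEdge_of_coveredEdge hcov (huw.trans hwv)
end

section
/- Let D be a DAG with covered edge u → v, and let D' be obtained from D by reversing u → v. Then D and D' have exactly the same set of v-structures. -/
/-- A v-structure `(i, j, k)`: edges `i → j` and `k → j`, with `i, k` distinct
and non-adjacent. -/
def VStruct {V : Type*} (E : V → V → Prop) (i j k : V) : Prop :=
  E i j ∧ E k j ∧ i ≠ k ∧ ¬ E i k ∧ ¬ E k i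

/-- Reversing a covered edge of a DAG leaves the set of v-structures unchanged. -/
theorem reverse_covered_edge_vstructures {V : Type*} (E : V → V → Prop)
    (hE : Acyclic E) (u v : V) (hcov : CoveredEdge E u v) :
    ∀ i j k, VStruct (reverseEdge E u v) i j k ↔ VStruct E i j k := by
  obtain ⟨huv, hpa⟩ := hcov
  have hvu : ¬ E v u := fun h => hE u (Relation.TransGen.head huv (Relation.TransGen.single h))
  have hne : u ≠ v := fun h => hE u (Relation.TransGen.single (h ▸ huv))
  have hpav : ∀ a, E a v ↔ (a = u ∨ E a u) := by
    intro a
    constructor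
    · intro h
      have h2 : a ∈ pa E v := h
      rw [← hpa] at h2
      exact h2
    · intro h
      have h2 : a ∈ insert u (pa E u) := by
        rcases h with h | h
        · exact Or.inl h
        · exact Or.inr h
      rw [hpa] at h2
      exact h2
  have hadj : ∀ a b, (reverseEdge E u v a b ∨ reverseEdge E u v b a) ↔ (E a b ∨ E b a) := by
    intro a b
    unfold reverseEdge
    constructor
    · rintro ((⟨h, _⟩ | ⟨rfl, rfl⟩) | (⟨h, _⟩ | ⟨rfl, rfl⟩))
      · exact Or.inl h
      · exact Or.inr huv
      · exact Or.inr h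
      · exact Or.inl huv
    · intro h
      by_cases hab : a = u ∧ b = v
      · obtain ⟨rfl, rfl⟩ := hab
        exact Or.inr (Or.inr ⟨rfl, rfl⟩)
      · by_cases hba : b = u ∧ a = v
        · obtain ⟨rfl, rfl⟩ := hba
          exact Or.inl (Or.inr ⟨rfl, rfl⟩)
        · rcases h with h | h
          · exact Or.inl (Or.inl ⟨h, hab⟩)
          · exact Or.inr (Or.inl ⟨h, hba⟩)
  intro i j k
  constructor
  · rintro ⟨hij, hkj, hik, h1, h2⟩
    have hnadj : ¬ E i k ∧ ¬ E k i := by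
      have := (hadj i k).not
      push_neg at this
      exact this.mp ⟨h1, h2⟩
    rcases hij with ⟨hij, _⟩ | ⟨hiv', hju'⟩
    · rcases hkj with ⟨hkj, _⟩ | ⟨hkv', hju'⟩
      · exact ⟨hij, hkj, hik, hnadj.1, hnadj.2⟩
      · -- k = v, j = u, hij : E i j
        exfalso
        have hiju : E i u := hju' ▸ hij
        have hiv : E i v := (hpav i).mpr (Or.inr hiju)
        by_cases hiu : i = u
        · exact h2 (Or.inr ⟨hkv', hiu⟩)
        · exact h1 (Or.inl ⟨by rw [hkv']; exact hiv, fun hc => hiu hc.1⟩)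
    · -- hiv' : i = v, hju' : j = u
      rcases hkj with ⟨hkj, _⟩ | ⟨hkv', _⟩
      · exfalso
        have hkju : E k u := hju' ▸ hkj
        have hkv : E k v := (hpav k).mpr (Or.inr hkju)
        by_cases hku : k = u
        · exact h1 (Or.inr ⟨hiv', hku⟩)
        · exact h2 (Or.inl ⟨by rw [hiv']; exact hkv, fun hc => hku hc.1⟩)
      · exact absurd (hiv'.trans hkv'.symm) hik
  · rintro ⟨hij, hkj, hik, h1, h2⟩
    have hnadj : ¬ reverseEdge E u v i k ∧ ¬ reverseEdge E u v k i := by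
      have := (hadj i k).not
      push_neg at this
      exact this.mpr ⟨h1, h2⟩
    have hij' : reverseEdge E u v i j := by
      by_cases hc : i = u ∧ j = v
      · obtain ⟨rfl, rfl⟩ := hc
        exfalso
        have := (hpav k).mp hkj
        rcases this with rfl | h
        · exact hik rfl
        · exact h2 h
      · exact Or.inl ⟨hij, hc⟩
    have hkj' : reverseEdge E u v k j := by
      by_cases hc : k = u ∧ j = v
      · obtain ⟨rfl, rfl⟩ := hc
        exfalso
        have := (hpav i).mp hij
        rcases this with rfl | h
        · exact hik rfl
        · exact h1 h
      · exact Or.inl ⟨hkj, hc⟩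
    exact ⟨hij', hkj', hik, hnadj.1, hnadj.2⟩
end

section
/- Let D be a DAG on vertex set V and let (T^(k), P^(k)), k = 1,…,K, be a collection of valid general interventions with T^(1) = ∅. Let u → v be a simultaneously covered edge of D with respect to this collection. Then {k : u ∈ T^(k)} = {k : v ∈ T^(k)}; equivalently, the sets A(u) = {k : u ∉ T^(k)} and A(v) = {k : v ∉ T^(k)} coincide. -/
/-- Post-intervention graph. -/
def interv {V : Type*} (E : V → V → Prop) (T : Set V) (P : V → Set V) :
    V → V → Prop :=
  fun i j => (j ∉ T ∧ E i j) ∨ (j ∈ T ∧ i ∈ P j)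

/-- The augmented I-DAG on `Option V`: the vertex `none` plays the role of the
intervention vertex `ζ`, with I-edges `ζ → j` for each target `j ∈ T`. -/
def aug {V : Type*} (Ek : V → V → Prop) (T : Set V) :
    Option V → Option V → Prop :=
  fun a b =>
    (∃ i j, a = some i ∧ b = some j ∧ Ek i j) ∨
    (a = none ∧ ∃ j ∈ T, b = some j)

/-- `u → v` is a covered edge of the augmented I-DAG. -/
def CoveredAug {V : Type*} (Ek : V → V → Prop) (T : Set V) (u v : V) : Prop :=
  CoveredEdge (aug Ek T) (some u) (some v)

/-- If `u → v` is simultaneously covered with respect to a collection of valid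
general interventions, then `u` and `v` are intervened in the same contexts:
`{k : u ∉ T k} = {k : v ∉ T k}`. -/
theorem simultaneously_covered_same_targets {V : Type*} (E : V → V → Prop)
    (hE : Acyclic E) (K : ℕ) (hK : 0 < K)
    (T : Fin K → Set V) (P : Fin K → V → Set V)
    (hT1 : T ⟨0, hK⟩ = ∅)
    (hvalid : ∀ k, Acyclic (interv E (T k) (P k)))
    (u v : V) (hcov : CoveredEdge E u v)
    (hsim : ∀ k, k ≠ ⟨0, hK⟩ →
      CoveredAug (interv E (T k) (P k)) (T k) u v ∨ (u ∈ T k ∧ v ∈ T k)) :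
    {k | u ∉ T k} = {k | v ∉ T k} := by
  ext k
  simp only [Set.mem_setOf_eq]
  by_cases hk : k = ⟨0, hK⟩
  · subst hk; simp [hT1]
  · rcases hsim k hk with hc | ⟨hu, hv⟩
    · obtain ⟨-, h⟩ := hc
      have := Set.ext_iff.mp h none
      simp [pa, aug] at this
      tauto
    · tauto
end
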